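/- Let K be a commutative ring, c, d ∈ K, and v*, w*, v, w : ℕ → K with v_i = c + v*_i and w_i = d + w*_i for all i. With A defined by the standard two-weight recurrence, for all k ≤ n: A^{v,w}(n,k) = ∑_{k ≤ t₁ ≤ t₂ ≤ t₃ ≤ n} C(t₃,t₂)·C(t₂,t₁)·c^{t₃−t₂}·d^{t₂−t₁}·A^{v*,0}(n,t₃)·A^{0,w*}(t₁,k), where C denotes binomial coefficients. -/

import Mathlib

/-!
The recurrence only sees the sums `v i + w k`, so a constant can be moved from one weight to the
other. The array factors as the matrix product `A^{v,w} = A^{v,0} A^{0,w}`, and for a constant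
weight `c` the array `A^{0,c}` is the binomial matrix `C(n,k) c^(n-k)`. Hence
`A^{v,w} = A^{v*,c} A^{d,w*} = A^{v*,0} A^{0,c} A^{d,0} A^{0,w*}`, which is the claimed triple sum.
-/

open Finset

/-- The generalized two-weight array `A^{v,w}(n,k)`. -/
def A {K : Type*} [CommRing K] (v w : ℕ → K) : ℕ → ℕ → K
  | 0, 0 => 1
  | 0, _ + 1 => 0
  | n + 1, 0 => (v n + w 0) * A v w n 0
  | n + 1, k + 1 => A v w n k + (v n + w (k + 1)) * A v w n (k + 1)

section

variable {K : Type*} [CommRing K]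

lemma A_zero (v w : ℕ → K) (k : ℕ) : A v w 0 k = if k = 0 then 1 else 0 := by
  cases k <;> rfl

lemma A_eq_zero_of_lt (v w : ℕ → K) {n k : ℕ} (h : n < k) : A v w n k = 0 := by
  induction n generalizing k with
  | zero => simp [A_zero, h.ne']
  | succ n ih =>
    cases k with
    | zero => omega
    | succ k => simp only [A, ih (by omega : n < k), ih (by omega : n < k + 1), mul_zero, add_zero]

lemma A_congr {v w v' w' : ℕ → K} (h : ∀ i j, v i + w j = v' i + w' j) : A v w = A v' w' := by
  funext n k
  induction n generalizing k with
  | zero => simp [A_zero]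
  | succ n ih => cases k <;> simp only [A, h, ih]

lemma A_zero_const (c : K) (n k : ℕ) :
    A (fun _ => 0) (fun _ => c) n k = n.choose k * c ^ (n - k) := by
  induction n generalizing k with
  | zero => cases k <;> simp [A_zero]
  | succ n ih =>
    cases k with
    | zero => simp [A, ih, pow_succ, mul_comm]
    | succ k =>
      rw [A, ih, ih, Nat.choose_succ_succ', Nat.succ_sub_succ]
      rcases lt_or_ge k n with hkn | hnk
      · obtain ⟨m, rfl⟩ := Nat.exists_eq_add_of_lt hkn
        rw [show k + m + 1 - k = m + 1 by omega, show k + m + 1 - (k + 1) = m by omega]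
        push_cast
        ring
      · rw [Nat.choose_eq_zero_of_lt (by omega : n < k + 1)]
        push_cast
        ring

lemma A_const_zero (c : K) (n k : ℕ) :
    A (fun _ => c) (fun _ => 0) n k = n.choose k * c ^ (n - k) := by
  rw [A_congr (v' := fun _ => 0) (w' := fun _ => c) (fun _ _ => by ring), A_zero_const]

lemma A_eq_sum_range_mul (v w : ℕ → K) {n N : ℕ} (h : n < N) (k : ℕ) :
    A v w n k = ∑ t ∈ range N, A v (fun _ => 0) n t * A (fun _ => 0) w t k := by
  induction n generalizing N k with
  | zero =>
    obtain ⟨N, rfl⟩ := Nat.exists_eq_add_of_lt h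
    simp [A_zero]
  | succ n ih =>
    obtain ⟨N, rfl⟩ := Nat.exists_eq_add_of_lt h
    -- Expand row `n + 1` of `A^{v,0}`; the `v n` part reassembles into row `n` by `ih`.
    have hrow : ∑ t ∈ range (n + 1 + N + 1), A v (fun _ => 0) (n + 1) t * A (fun _ => 0) w t k
        = ∑ s ∈ range (n + 1 + N), A v (fun _ => 0) n s * A (fun _ => 0) w (s + 1) k
          + v n * A v w n k := by
      rw [sum_range_succ', ih (N := n + 1 + N + 1) (by omega), sum_range_succ' _ (n + 1 + N),
        mul_add, mul_sum]
      simp only [A, add_zero, add_mul, sum_add_distrib, mul_assoc]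
      ring
    rw [hrow]
    have ih' k := (ih (N := n + 1 + N) (by omega) k).symm
    cases k with
    | zero =>
      simp only [A, zero_add, mul_left_comm _ (w 0), ← mul_sum, ih']
      ring
    | succ k =>
      simp only [A, zero_add, mul_add, mul_left_comm _ (w (k + 1)), sum_add_distrib, ← mul_sum,
        ih']
      ring

lemma A_eq_sum_Icc_mul (v w : ℕ → K) (n k : ℕ) :
    A v w n k = ∑ t ∈ Icc k n, A v (fun _ => 0) n t * A (fun _ => 0) w t k := by
  rw [A_eq_sum_range_mul v w n.lt_succ_self]
  refine (sum_subset (fun t ht => by simp only [mem_Icc, mem_range] at *; omega)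
    fun t _ ht => ?_).symm
  simp only [mem_Icc, mem_range, not_and_or] at *
  rw [A_eq_zero_of_lt (fun _ => 0) w (by omega : t < k), mul_zero]

lemma A_add_const_left (c : K) (vs : ℕ → K) (n k : ℕ) :
    A (fun i => c + vs i) (fun _ => 0) n k =
      ∑ t ∈ Icc k n, (t.choose k : K) * c ^ (t - k) * A vs (fun _ => 0) n t := by
  rw [A_congr (v' := vs) (w' := fun _ => c) (fun _ _ => by ring), A_eq_sum_Icc_mul]
  exact sum_congr rfl fun t _ => by rw [A_zero_const]; ring

lemma A_add_const_right (d : K) (ws : ℕ → K) (n k : ℕ) :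
    A (fun _ => 0) (fun j => d + ws j) n k =
      ∑ t ∈ Icc k n, (n.choose t : K) * d ^ (n - t) * A (fun _ => 0) ws t k := by
  rw [A_congr (v' := fun _ => d) (w' := ws) (fun _ _ => by ring), A_eq_sum_Icc_mul]
  exact sum_congr rfl fun t _ => by rw [A_const_zero]

end

theorem stmt_9_general {K : Type*} [CommRing K] (c d : K) (vs ws v w : ℕ → K)
    (hv : ∀ i, v i = c + vs i) (hw : ∀ i, w i = d + ws i) (n k : ℕ) :
    A v w n k =
      ∑ t3 ∈ Finset.Icc k n, ∑ t2 ∈ Finset.Icc k t3, ∑ t1 ∈ Finset.Icc k t2,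
        (Nat.choose t3 t2 : K) * (Nat.choose t2 t1 : K) * c ^ (t3 - t2) * d ^ (t2 - t1) *
          A vs (fun _ => 0) n t3 * A (fun _ => 0) ws t1 k := by
  obtain rfl : v = fun i => c + vs i := funext hv
  obtain rfl : w = fun j => d + ws j := funext hw
  rw [A_eq_sum_Icc_mul]
  simp_rw [A_add_const_left, A_add_const_right, sum_mul_sum]
  rw [sum_comm' (t' := Icc k n) (s' := fun t3 => Icc k t3)
    (fun _ _ => by simp only [mem_Icc]; omega)]
  exact sum_congr rfl fun _ _ => sum_congr rfl fun _ _ => sum_congr rfl fun _ _ => by ring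

theorem stmt_9 {K : Type*} [CommRing K] (c d : K) (vs ws v w : ℕ → K)
    (hv : ∀ i, v i = c + vs i) (hw : ∀ i, w i = d + ws i) (n k : ℕ) (hk : k ≤ n) :
    A v w n k =
      ∑ t3 ∈ Finset.Icc k n, ∑ t2 ∈ Finset.Icc k t3, ∑ t1 ∈ Finset.Icc k t2,
        (Nat.choose t3 t2 : K) * (Nat.choose t2 t1 : K) * c ^ (t3 - t2) * d ^ (t2 - t1) *
          A vs (fun _ => 0) n t3 * A (fun _ => 0) ws t1 k :=
  stmt_9_general c d vs ws v w hv hw n k
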